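/- arXiv:1511.01233 — 4 statements merged into one kernel-verified Lean document; each statement's English description precedes it below -/
import Mathlib

section
/- Let C > 0 and D ∈ ℝ, and let x : ℝ → ℝ be a continuous function such that x t > 1 for every t and li(x t) = C·t + D for every t. Then the function f = log ∘ x satisfies, for every t₀, HasDerivAt f (C · f(t₀) · exp(−f(t₀))) t₀; in other words f(t) = log(li⁻¹(C t + D)) solves the differential equation f′ = C f e^{−f}. -/
/-! Since `li' = 1 / log` does not vanish on `(1, ∞)`, the inverse function rule makes the continuous
`x = li⁻¹ (C t + D)` differentiable with `x' = C log x`. Hence `(log x)' = x' / x = C log x · e^{-log x}`. -/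

/-- The logarithmic integral `li t = ∫_2^t dτ / log τ`. -/
noncomputable def li (t : ℝ) : ℝ := ∫ τ in (2:ℝ)..t, 1 / Real.log τ

open Filter Topology

lemma continuousAt_one_div_log {τ : ℝ} (hτ : 1 < τ) :
    ContinuousAt (fun τ => 1 / Real.log τ) τ :=
  continuousAt_const.div (Real.continuousAt_log (by linarith)) (Real.log_pos hτ).ne'

lemma hasDerivAt_li {y : ℝ} (hy : 1 < y) : HasDerivAt li (1 / Real.log y) y := by
  have hint : IntervalIntegrable (fun τ => 1 / Real.log τ) MeasureTheory.volume 2 y :=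
    ContinuousOn.intervalIntegrable fun τ hτ =>
      (continuousAt_one_div_log <| (lt_min one_lt_two hy).trans_le hτ.1).continuousWithinAt
  exact intervalIntegral.integral_hasDerivAt_right hint
    (measurable_const.div Real.measurable_log).stronglyMeasurable.stronglyMeasurableAtFilter
    (continuousAt_one_div_log hy)

lemma HasDerivAt.of_comp_eq_affine {g x : ℝ → ℝ} {g' C D t₀ : ℝ}
    (hg : HasDerivAt g g' (x t₀)) (hg' : g' ≠ 0) (hC : C ≠ 0) (hx : ContinuousAt x t₀)
    (h : ∀ᶠ t in 𝓝 t₀, g (x t) = C * t + D) : HasDerivAt x (C / g') t₀ := by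
  have hinv : HasDerivAt (fun s => (g s - D) / C) (g' / C) (x t₀) :=
    (hg.sub_const D).div_const C
  simpa using hinv.of_local_left_inverse hx (div_ne_zero hg' hC) <|
    h.mono fun t ht => by simp only [ht]; field_simp; ring

/-- `f(t) = log (li⁻¹ (C t + D))` solves the ODE `f' = C f e^{-f}`. -/
theorem log_inverse_li_solves_ode
    (C D : ℝ) (hC : 0 < C)
    (x : ℝ → ℝ) (hx : Continuous x) (hx1 : ∀ t, 1 < x t)
    (hli : ∀ t, li (x t) = C * t + D) (t₀ : ℝ) :
    HasDerivAt (fun t => Real.log (x t))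
      (C * Real.log (x t₀) * Real.exp (-(Real.log (x t₀)))) t₀ := by
  have hx₀ : 0 < x t₀ := one_pos.trans (hx1 t₀)
  have hderiv : HasDerivAt x (C * Real.log (x t₀)) t₀ := by
    simpa [div_div_eq_mul_div] using (hasDerivAt_li (hx1 t₀)).of_comp_eq_affine
      (one_div_ne_zero (Real.log_pos (hx1 t₀)).ne') hC.ne' hx.continuousAt (Eventually.of_forall hli)
  convert hderiv.log hx₀.ne' using 1
  rw [Real.exp_neg, Real.exp_log hx₀, div_eq_mul_inv]
end

section
/- Let a < b be reals and let x : ℝ → ℝ be continuous on [a, b] with x t ≥ e for every t ∈ [a, b] and li(x t) = t for every t ∈ [a, b]. Then the function log ∘ x is concave on [a, b]. -/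
/-!
Differentiating `li (x t) = t` gives `x' = log x`, so `(log ∘ x)' = log x / x`. Since `li` is
strictly increasing, `x` is monotone, and `y ↦ log y / y` is antitone on `[e, ∞)`; hence the
derivative of `log ∘ x` is antitone and `log ∘ x` is concave.
-/

open Real Set Filter Topology

lemma continuousOn_one_div_log : ContinuousOn (fun τ : ℝ => 1 / log τ) (Ioi 1) :=
  continuousOn_const.div (continuousOn_log.mono fun _ hτ => (zero_lt_one.trans hτ).ne')
    fun _ hτ => (log_pos hτ).ne'

lemma hasDerivAt_li_s5 {t : ℝ} (ht : 1 < t) : HasDerivAt li (1 / log t) t := by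
  have hsub : uIcc 2 t ⊆ Ioi 1 := fun τ hτ => (lt_min one_lt_two ht).trans_le hτ.1
  exact intervalIntegral.integral_hasDerivAt_right
    ((continuousOn_one_div_log.mono hsub).intervalIntegrable)
    (continuousOn_one_div_log.stronglyMeasurableAtFilter isOpen_Ioi t ht)
    (continuousOn_one_div_log.continuousAt (Ioi_mem_nhds ht))

lemma strictMonoOn_li : StrictMonoOn li (Ioi 1) := by
  refine strictMonoOn_of_deriv_pos (convex_Ioi 1)
    (fun t ht => (hasDerivAt_li_s5 ht).continuousAt.continuousWithinAt) fun t ht => ?_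
  rw [interior_Ioi] at ht
  rw [(hasDerivAt_li_s5 ht).deriv]
  exact one_div_pos.mpr (log_pos ht)

lemma monotoneOn_of_li_comp_eq {s : Set ℝ} {x : ℝ → ℝ} (hx1 : ∀ t ∈ s, 1 < x t)
    (hli : ∀ t ∈ s, li (x t) = t) : MonotoneOn x s := fun t ht u hu htu =>
  (strictMonoOn_li.le_iff_le (hx1 t ht) (hx1 u hu)).mp (by rwa [hli t ht, hli u hu])

lemma hasDerivAt_of_li_comp_eventuallyEq {x : ℝ → ℝ} {t : ℝ} (hxc : ContinuousAt x t)
    (hx1 : 1 < x t) (hli : ∀ᶠ s in 𝓝 t, li (x s) = s) : HasDerivAt x (log (x t)) t := by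
  simpa using (hasDerivAt_li_s5 hx1).of_local_left_inverse hxc
    (one_div_pos.mpr (log_pos hx1)).ne' hli

theorem concaveOn_log_inverse_li_general
    (a b : ℝ)
    (x : ℝ → ℝ) (hx : ContinuousOn x (Set.Icc a b))
    (hxe : ∀ t ∈ Set.Icc a b, Real.exp 1 ≤ x t)
    (hli : ∀ t ∈ Set.Icc a b, li (x t) = t) :
    ConcaveOn ℝ (Set.Icc a b) (fun t => Real.log (x t)) := by
  have hx1 : ∀ t ∈ Icc a b, 1 < x t := fun t ht =>
    (one_lt_exp_iff.mpr one_pos).trans_le (hxe t ht)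
  have hmono : MonotoneOn x (Icc a b) := monotoneOn_of_li_comp_eq hx1 hli
  have hderiv : ∀ t ∈ interior (Icc a b),
      HasDerivAt (fun s => log (x s)) (log (x t) / x t) t := fun t ht =>
    have hnhds : Icc a b ∈ 𝓝 t := mem_interior_iff_mem_nhds.mp ht
    (hasDerivAt_of_li_comp_eventuallyEq (hx.continuousAt hnhds) (hx1 t (interior_subset ht))
      (eventually_of_mem hnhds hli)).log (zero_lt_one.trans (hx1 t (interior_subset ht))).ne'
  refine AntitoneOn.concaveOn_of_deriv (convex_Icc a b)
    (hx.log fun t ht => (zero_lt_one.trans (hx1 t ht)).ne')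
    (fun t ht => (hderiv t ht).differentiableAt.differentiableWithinAt) fun s hs t ht hst => ?_
  rw [(hderiv s hs).deriv, (hderiv t ht).deriv]
  exact log_div_self_antitoneOn (hxe s (interior_subset hs)) (hxe t (interior_subset ht))
    (hmono (interior_subset hs) (interior_subset ht) hst)

/-- `t ↦ log (li⁻¹ t)` is concave wherever `li⁻¹ t ≥ e`. -/
theorem concaveOn_log_inverse_li
    (a b : ℝ) (hab : a < b)
    (x : ℝ → ℝ) (hx : ContinuousOn x (Set.Icc a b))
    (hxe : ∀ t ∈ Set.Icc a b, Real.exp 1 ≤ x t)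
    (hli : ∀ t ∈ Set.Icc a b, li (x t) = t) :
    ConcaveOn ℝ (Set.Icc a b) (fun t => Real.log (x t)) :=
  concaveOn_log_inverse_li_general a b x hx hxe hli
end

section
/- Let C > 0 and let σ : ℕ → ℝ satisfy σ_{k+1} = σ_k · (1 + C · exp(−σ_k)) for all k, with σ_0 ≥ 2 and σ_0 · exp(−σ_0) ≤ 1/(12 C). Then for every k ∈ ℕ, li(exp(σ_k)) ≥ C · k + li(exp(σ_0)); equivalently, σ_k ≥ log(li⁻¹(C k + li(e^{σ_0}))). -/
lemma integrable_one_div_log {a b : ℝ} (ha : 2 ≤ a) (hab : a ≤ b) :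
    IntervalIntegrable (fun τ => 1 / Real.log τ) MeasureTheory.volume a b := by
  apply ContinuousOn.intervalIntegrable
  apply ContinuousOn.div continuousOn_const
  · exact Real.continuousOn_log.mono fun x hx => by
      rw [Set.uIcc_of_le hab] at hx
      exact ne_of_gt (by linarith [hx.1])
  · intro x hx
    rw [Set.uIcc_of_le hab] at hx
    have h1 : (1:ℝ) < x := by linarith [hx.1]
    exact ne_of_gt (Real.log_pos h1)

lemma li_diff_ge {a b : ℝ} (h2 : 2 ≤ a) (hab : a ≤ b) :
    (b - a) / Real.log b ≤ li b - li a := by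
  have hb2 : 2 ≤ b := le_trans h2 hab
  have hint : IntervalIntegrable (fun τ => 1 / Real.log τ) MeasureTheory.volume a b :=
    integrable_one_div_log h2 hab
  have hsplit : li b - li a = ∫ τ in a..b, 1 / Real.log τ := by
    unfold li
    rw [← intervalIntegral.integral_add_adjacent_intervals
      (integrable_one_div_log le_rfl h2) hint]
    ring
  rw [hsplit]
  have hlogb : 0 < Real.log b := Real.log_pos (by linarith)
  have : (b - a) / Real.log b = ∫ _ in a..b, 1 / Real.log b := by
    rw [intervalIntegral.integral_const]
    simp [div_eq_mul_inv, smul_eq_mul]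
  rw [this]
  apply intervalIntegral.integral_mono_on hab (intervalIntegrable_const) hint
  intro x hx
  have hx2 : 2 ≤ x := le_trans h2 hx.1
  have hlx : 0 < Real.log x := Real.log_pos (by linarith)
  apply one_div_le_one_div_of_le hlx
  exact Real.log_le_log (by linarith) hx.2

/-- Lower bound for the Euler scheme `σ_{k+1} = σ_k (1 + C e^{−σ_k})`:
`li (exp (σ k)) ≥ C k + li (exp (σ 0))`, i.e. `σ_k ≥ log (li⁻¹ (C k + li e^{σ₀}))`. -/
theorem euler_scheme_lower_bound
    (C : ℝ) (hC : 0 < C) (σ : ℕ → ℝ)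
    (hrec : ∀ k, σ (k + 1) = σ k * (1 + C * Real.exp (-(σ k))))
    (h0 : 2 ≤ σ 0)
    (h0' : σ 0 * Real.exp (-(σ 0)) ≤ 1 / (12 * C)) :
    ∀ k : ℕ, C * k + li (Real.exp (σ 0)) ≤ li (Real.exp (σ k)) := by
  -- strengthen: also carry 2 ≤ σ k
  suffices H : ∀ k : ℕ, 2 ≤ σ k ∧ C * k + li (Real.exp (σ 0)) ≤ li (Real.exp (σ k)) from
    fun k => (H k).2
  intro k
  induction k with
  | zero => exact ⟨h0, by simp⟩
  | succ k ih =>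
    obtain ⟨hk2, hkli⟩ := ih
    set a := σ k with ha
    set δ := C * Real.exp (-a) with hδ
    have hδpos : 0 < δ := mul_pos hC (Real.exp_pos _)
    have hrk : σ (k + 1) = a + a * δ := by rw [hrec k]; ring
    have hapos : 0 < a := by linarith
    have haδ : 0 ≤ a * δ := le_of_lt (mul_pos hapos hδpos)
    have hk12 : 2 ≤ σ (k + 1) := by rw [hrk]; linarith
    have hmono : a ≤ σ (k + 1) := by rw [hrk]; linarith
    -- li (exp σ(k+1)) - li (exp a) ≥ C
    have hexpa2 : (2:ℝ) ≤ Real.exp a := by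
      calc (2:ℝ) ≤ a := hk2
      _ ≤ Real.exp a := (Real.add_one_le_exp a).trans' (by linarith)
    have hexpmono : Real.exp a ≤ Real.exp (σ (k+1)) := Real.exp_le_exp.2 hmono
    have key := li_diff_ge hexpa2 hexpmono
    rw [Real.log_exp] at key
    have hquad : 1 + a * δ + (a * δ)^2 / 2 ≤ Real.exp (a * δ) :=
      Real.quadratic_le_exp_of_nonneg haδ
    have hediff : Real.exp a * (a * δ + (a * δ)^2 / 2) ≤
        Real.exp (σ (k+1)) - Real.exp a := by
      rw [hrk, Real.exp_add]
      have := mul_le_mul_of_nonneg_left hquad (Real.exp_pos a).le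
      nlinarith [Real.exp_pos a]
    -- exp a * a * δ = C * a ; exp a * (aδ)²/2 = C * a * (a δ) / 2 ≥ C * (a δ) since a ≥ 2
    have heδ : Real.exp a * δ = C := by
      rw [hδ, Real.exp_neg]
      field_simp
    have hσpos : 0 < σ (k + 1) := by linarith
    have hgoal : C * σ (k + 1) ≤ Real.exp (σ (k+1)) - Real.exp a := by
      refine le_trans ?_ hediff
      have h1 : Real.exp a * (a * δ + (a * δ)^2 / 2)
          = C * a + (C * a) * (a * δ) / 2 := by
        have : Real.exp a * (a * δ) = C * a := by rw [← heδ]; ring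
        nlinarith [this]
      rw [h1, hrk]
      -- need C*(a + a*δ) ≤ C*a + C*a*(a*δ)/2, i.e. C*a*δ ≤ C*a*(a*δ)/2, true since a ≥ 2
      nlinarith [mul_nonneg (mul_nonneg (mul_nonneg hC.le hapos.le) hδpos.le) (by linarith : (0:ℝ) ≤ a - 2)]
    have hstep : C ≤ li (Real.exp (σ (k+1))) - li (Real.exp a) := by
      refine le_trans ?_ key
      rw [le_div_iff₀ hσpos]
      linarith
    refine ⟨hk12, ?_⟩
    push_cast
    linarith
end

section
/- Let C > 0 and let σ : ℕ → ℝ satisfy σ_{k+1} = σ_k · (1 + C · exp(−σ_k)) for all k, with σ_0 ≥ 2 and σ_0 · exp(−σ_0) ≤ 1/(12 C). Then for every k ∈ ℕ, li(exp(σ_k − 1)) ≤ C · k + li(exp(σ_0)); equivalently, σ_k ≤ log(li⁻¹(C k + li(e^{σ_0}))) + 1. -/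
lemma xexp_decreasing {a b : ℝ} (ha : 1 ≤ a) (hab : a ≤ b) :
    b * Real.exp (-b) ≤ a * Real.exp (-a) := by
  have h1 : b ≤ a * Real.exp (b - a) := by
    nlinarith [Real.add_one_le_exp (b - a), Real.exp_pos (b - a)]
  calc b * Real.exp (-b) ≤ (a * Real.exp (b - a)) * Real.exp (-b) := by
        exact mul_le_mul_of_nonneg_right h1 (Real.exp_pos _).le
    _ = a * Real.exp (-a) := by
        rw [mul_assoc, ← Real.exp_add]
        congr 2
        ring

lemma continuousOn_invlog {s : Set ℝ} (hs : ∀ x ∈ s, 2 ≤ x) :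
    ContinuousOn (fun τ : ℝ => 1 / Real.log τ) s := by
  apply ContinuousOn.div continuousOn_const
  · exact Real.continuousOn_log.mono (fun x hx => by
      have := hs x hx; simp only [Set.mem_compl_iff, Set.mem_singleton_iff]; intro h
      rw [h] at this; linarith)
  · intro x hx
    have h1 : (1:ℝ) < x := by linarith [hs x hx]
    exact ne_of_gt (Real.log_pos h1)

lemma li_intble {a b : ℝ} (ha : 2 ≤ a) (hb : 2 ≤ b) :
    IntervalIntegrable (fun τ : ℝ => 1 / Real.log τ) MeasureTheory.volume a b := by
  apply ContinuousOn.intervalIntegrable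
  apply continuousOn_invlog
  intro x hx
  rcases Set.mem_uIcc.mp hx with h | h
  · linarith [h.1]
  · linarith [h.1]

lemma li_sub_eq {a b : ℝ} (ha : 2 ≤ a) (hb : 2 ≤ b) :
    li b - li a = ∫ τ in a..b, 1 / Real.log τ := by
  have h1 := li_intble (le_refl (2:ℝ)) ha
  have h2 := li_intble ha hb
  rw [li, li, ← intervalIntegral.integral_add_adjacent_intervals h1 h2]
  ring

lemma li_mono {a b : ℝ} (ha : 2 ≤ a) (hab : a ≤ b) : li a ≤ li b := by
  have hb : 2 ≤ b := le_trans ha hab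
  have key := li_sub_eq ha hb
  have hpos : 0 ≤ ∫ τ in a..b, 1 / Real.log τ := by
    apply intervalIntegral.integral_nonneg hab
    intro x hx
    have : (1:ℝ) ≤ x := by linarith [hx.1]
    exact one_div_nonneg.mpr (Real.log_nonneg this)
  linarith

lemma li_diff_le {a b : ℝ} (ha : 2 ≤ a) (hab : a ≤ b) :
    li b - li a ≤ (b - a) / Real.log a := by
  have hb : 2 ≤ b := le_trans ha hab
  have h2 := li_intble ha hb
  have key := li_sub_eq ha hb
  have hloga : 0 < Real.log a := Real.log_pos (by linarith)
  have hmono : (∫ τ in a..b, 1 / Real.log τ) ≤ ∫ _ in a..b, 1 / Real.log a := by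
    apply intervalIntegral.integral_mono_on hab h2 intervalIntegrable_const
    intro x hx
    have hx2 : 2 ≤ x := le_trans ha hx.1
    have : Real.log a ≤ Real.log x := Real.log_le_log (by linarith) hx.1
    exact one_div_le_one_div_of_le hloga this
  rw [key]
  calc (∫ τ in a..b, 1 / Real.log τ) ≤ ∫ _ in a..b, 1 / Real.log a := hmono
    _ = (b - a) * (1 / Real.log a) := by
        rw [intervalIntegral.integral_const, smul_eq_mul]
    _ = (b - a) / Real.log a := by ring

/-- Upper bound for the Euler scheme `σ_{k+1} = σ_k (1 + C e^{−σ_k})`: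
`li (exp (σ k − 1)) ≤ C k + li (exp (σ 0))`, i.e.
`σ_k ≤ log (li⁻¹ (C k + li e^{σ₀}))) + 1`. -/
theorem euler_scheme_upper_bound
    (C : ℝ) (hC : 0 < C) (σ : ℕ → ℝ)
    (hrec : ∀ k, σ (k + 1) = σ k * (1 + C * Real.exp (-(σ k))))
    (h0 : 2 ≤ σ 0)
    (h0' : σ 0 * Real.exp (-(σ 0)) ≤ 1 / (12 * C)) :
    ∀ k : ℕ, li (Real.exp (σ k - 1)) ≤ C * k + li (Real.exp (σ 0)) := by
  have he1 : (2:ℝ) ≤ Real.exp 1 := by nlinarith [Real.add_one_le_exp (1:ℝ)]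
  -- σ is increasing and ≥ σ 0
  have hmono : ∀ k, σ 0 ≤ σ k := by
    intro k
    induction k with
    | zero => exact le_refl _
    | succ n ih =>
      rw [hrec n]
      nlinarith [Real.exp_pos (-(σ n)), mul_pos hC (Real.exp_pos (-(σ n)))]
  have hge2 : ∀ k, 2 ≤ σ k := fun k => le_trans h0 (hmono k)
  -- Δ bound
  have hΔle : ∀ k, σ k * Real.exp (-(σ k)) ≤ 1 / (12 * C) := fun k =>
    le_trans (xexp_decreasing (by linarith [h0]) (hmono k)) h0'
  -- base for exp comparison: exp(1/12) ≤ exp 1 / 2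
  have hexp112 : Real.exp (1/12 : ℝ) ≤ Real.exp 1 / 2 := by
    have hlog2 : Real.log 2 < 0.6931471808 := Real.log_two_lt_d9
    have h : (1/12 : ℝ) ≤ 1 - Real.log 2 := by linarith
    calc Real.exp (1/12 : ℝ) ≤ Real.exp (1 - Real.log 2) := Real.exp_le_exp.mpr h
      _ = Real.exp 1 / 2 := by rw [Real.exp_sub, Real.exp_log (by norm_num : (0:ℝ) < 2)]
  intro k
  induction k with
  | zero =>
    simp only [Nat.cast_zero, mul_zero, zero_add]
    have ha : (2:ℝ) ≤ Real.exp (σ 0 - 1) := by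
      calc (2:ℝ) ≤ Real.exp 1 := he1
        _ ≤ Real.exp (σ 0 - 1) := Real.exp_le_exp.mpr (by linarith)
    have hab : Real.exp (σ 0 - 1) ≤ Real.exp (σ 0) := Real.exp_le_exp.mpr (by linarith)
    exact li_mono ha hab
  | succ n ih =>
    set s := σ n with hs
    have hs2 : 2 ≤ s := hge2 n
    set Δ : ℝ := C * (s * Real.exp (-s)) with hΔdef
    have hΔpos : 0 < Δ := mul_pos hC (mul_pos (by linarith) (Real.exp_pos _))
    have hΔ : Δ ≤ 1/12 := by
      have := hΔle n
      calc Δ ≤ C * (1 / (12 * C)) := mul_le_mul_of_nonneg_left this hC.le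
        _ = 1/12 := by field_simp
    have hs' : σ (n + 1) = s + Δ := by
      rw [hrec n]; ring
    -- a and b
    have ha : (2:ℝ) ≤ Real.exp (s - 1) := by
      calc (2:ℝ) ≤ Real.exp 1 := he1
        _ ≤ Real.exp (s - 1) := Real.exp_le_exp.mpr (by linarith)
    have hab : Real.exp (s - 1) ≤ Real.exp (σ (n+1) - 1) := by
      apply Real.exp_le_exp.mpr
      rw [hs']; linarith
    have hd := li_diff_le ha hab
    rw [Real.log_exp] at hd
    -- rewrite b
    have hb : Real.exp (σ (n+1) - 1) = Real.exp (s - 1) * Real.exp Δ := by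
      rw [hs', ← Real.exp_add]; congr 1; ring
    -- key: exp(s-1) * (exp Δ - 1) ≤ C * (s - 1)
    have hkey : Real.exp (s - 1) * (Real.exp Δ - 1) ≤ C * (s - 1) := by
      have h1 : Real.exp Δ - 1 ≤ Δ * Real.exp Δ := by
        have hm : Real.exp Δ * Real.exp (-Δ) = 1 := by
          rw [← Real.exp_add]; simp
        nlinarith [Real.add_one_le_exp (-Δ), Real.exp_pos Δ, hm]
      have hexpΔ : Real.exp Δ ≤ Real.exp 1 / 2 :=
        le_trans (Real.exp_le_exp.mpr hΔ) hexp112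
      have h2 : Real.exp (s - 1) * Δ = C * s * Real.exp (-(1:ℝ)) := by
        rw [hΔdef]
        rw [show s - 1 = -(-s) + (-(1:ℝ)) by ring, Real.exp_add, Real.exp_neg (-s)]
        have := Real.exp_pos (-s)
        field_simp
      have hexppos := Real.exp_pos (s - 1)
      have hexpΔpos := Real.exp_pos Δ
      have hinv : Real.exp (-(1:ℝ)) * Real.exp 1 = 1 := by
        rw [← Real.exp_add]; simp
      calc Real.exp (s - 1) * (Real.exp Δ - 1)
          ≤ Real.exp (s - 1) * (Δ * Real.exp Δ) :=
            mul_le_mul_of_nonneg_left h1 hexppos.le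
        _ = (C * s * Real.exp (-(1:ℝ))) * Real.exp Δ := by
            rw [← h2]; ring
        _ ≤ (C * s * Real.exp (-(1:ℝ))) * (Real.exp 1 / 2) := by
            apply mul_le_mul_of_nonneg_left hexpΔ
            positivity
        _ = C * s / 2 * (Real.exp (-(1:ℝ)) * Real.exp 1) := by ring
        _ = C * s / 2 := by rw [hinv]; ring
        _ ≤ C * (s - 1) := by nlinarith
    -- conclude the step
    have hstep : li (Real.exp (σ (n+1) - 1)) - li (Real.exp (s - 1)) ≤ C := by
      have hsm1 : 0 < s - 1 := by linarith
      calc li (Real.exp (σ (n+1) - 1)) - li (Real.exp (s - 1))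
          ≤ (Real.exp (σ (n+1) - 1) - Real.exp (s - 1)) / (s - 1) := hd
        _ = Real.exp (s - 1) * (Real.exp Δ - 1) / (s - 1) := by rw [hb]; ring
        _ ≤ C * (s - 1) / (s - 1) := div_le_div_of_nonneg_right hkey hsm1.le
        _ = C := by field_simp
    have : (↑(n + 1) : ℝ) = (n : ℝ) + 1 := by push_cast; ring
    rw [this]
    linarith
end
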